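/- Let T=(V,E) be a finite tree with positive edge weights and shortest-path metric d. For a vertex u with neighbor set N(u) and for w∈N(u), let C_{T∖(u,w)}(w) denote the vertex set of the connected component of T with edge (u,w) removed that contains w. Let u^f∈N(u) be a furthest neighbor of u, i.e., the average distance from u to C_{T∖(u,u^f)}(u^f) is at least the average distance from u to C_{T∖(u,w)}(w) for every w∈N(u). Then in the 2-clustering of V given by the two components of T with edge (u,u^f) removed, the vertex u is IP-stable: the average distance from u to the other vertices of its own component is at most the average distance from u to the vertices of the component containing u^f. -/

import Mathlib

open Finset

open scoped Classical in
/-- The shortest-path (tree) metric induced on the vertices of a tree `G` with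
edge weights `w`: the total weight of the unique path between two vertices. -/
noncomputable def treeDist {V : Type*} (G : SimpleGraph V) (hG : G.IsTree)
    (w : Sym2 V → ℝ) (u v : V) : ℝ :=
  (((hG.existsUnique_path u v).exists.choose).edges.map w).sum

open scoped Classical in
/-- The vertex set of the connected component containing `z` after removing the
edge `s(u, z)` from `G`. -/
noncomputable def compAfterDelete {V : Type*} [Fintype V]
    (G : SimpleGraph V) (u z : V) : Finset V :=
  Finset.univ.filter fun x => (G.deleteEdges {s(u, z)}).Reachable z x

/-!
Deleting `u` from its side of the edge `(u, u^f)` leaves the components `C_{T∖(u,z)}(z)` for the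
other neighbours `z` of `u`; the vertex `y` lies in the one whose `z` is the second vertex of the
path from `u` to `y`. Each of these components has average distance from `u` at most that of the
component of `u^f`, and the average over a disjoint union is at most the largest of the averages
(mediant inequality). The vertex `u` contributes `0` to the sum and exactly the `- 1` to the
denominator.
-/

theorem Finset.sum_div_sum_le_of_forall_div_le {ι K : Type*} [Field K] [LinearOrder K]
    [IsStrictOrderedRing K] {s : Finset ι} {a b : ι → K} {M : K} (hM : 0 ≤ M)
    (hb : ∀ i ∈ s, 0 < b i) (h : ∀ i ∈ s, a i / b i ≤ M) :
    (∑ i ∈ s, a i) / ∑ i ∈ s, b i ≤ M := by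
  have hsum : ∑ i ∈ s, a i ≤ M * ∑ i ∈ s, b i := by
    rw [mul_sum]
    exact sum_le_sum fun i hi => (div_le_iff₀ (hb i hi)).1 (h i hi)
  rcases (sum_nonneg fun i hi => (hb i hi).le).eq_or_lt with hzero | hpos
  · rw [← hzero, div_zero]
    exact hM
  · exact (div_le_iff₀ hpos).2 hsum

namespace SimpleGraph

variable {V : Type*} {G : SimpleGraph V}

theorem Walk.IsPath.mk_start_mem_edges_iff {u v z : V} {p : G.Walk u v} (hp : p.IsPath) :
    s(u, z) ∈ p.edges ↔ ¬p.Nil ∧ z = p.snd := by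
  cases p with
  | nil => simp
  | cons h q =>
    rw [Walk.cons_isPath_iff] at hp
    have hq : s(u, z) ∉ q.edges := fun hz => hp.2 (q.fst_mem_support_of_mem_edges hz)
    simp [hq, h.ne]

namespace IsTree

noncomputable def path (hG : G.IsTree) (a b : V) : G.Walk a b :=
  (hG.existsUnique_path a b).exists.choose

theorem path_isPath (hG : G.IsTree) (a b : V) : (hG.path a b).IsPath :=
  (hG.existsUnique_path a b).exists.choose_spec

theorem eq_path (hG : G.IsTree) {a b : V} {p : G.Walk a b} (hp : p.IsPath) : p = hG.path a b :=
  (hG.existsUnique_path a b).unique hp (hG.path_isPath a b)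

theorem path_self (hG : G.IsTree) (a : V) : hG.path a a = Walk.nil :=
  (hG.eq_path Walk.IsPath.nil).symm

theorem reachable_deleteEdges_iff (hG : G.IsTree) {v w a b : V} :
    (G.deleteEdges {s(v, w)}).Reachable a b ↔ s(v, w) ∉ (hG.path a b).edges := by
  classical
  rw [reachable_deleteEdges_iff_exists_walk]
  refine ⟨fun ⟨p, hp⟩ => ?_, fun h => ⟨_, h⟩⟩
  rw [← hG.eq_path p.bypass_isPath]
  exact fun h => hp (p.edges_bypass_subset_edges h)

theorem reachable_deleteEdges_iff_not_reachable (hG : G.IsTree) {u z y : V} (h : G.Adj u z) :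
    (G.deleteEdges {s(u, z)}).Reachable z y ↔ ¬(G.deleteEdges {s(u, z)}).Reachable u y := by
  refine ⟨fun hz hu => ?_, fun hu => ?_⟩
  · exact isBridge_iff.1 (isAcyclic_iff_forall_adj_isBridge.1 hG.isAcyclic h)
      (hu.trans hz.symm)
  · by_contra hz
    have hmem := (hG.path z y).mem_edges_of_not_reachable_deleteEdges hz
    rw [Sym2.eq_swap, (hG.path_isPath z y).mk_start_mem_edges_iff] at hmem
    obtain ⟨hnil, rfl⟩ := hmem
    have htail := hG.path_isPath z y
    rw [← (hG.path z y).cons_tail_eq hnil, Walk.cons_isPath_iff] at htail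
    refine hu ((reachable_deleteEdges_iff_exists_walk).2 ⟨(hG.path z y).tail, fun he => ?_⟩)
    exact htail.2 ((hG.path z y).tail.snd_mem_support_of_mem_edges he)

end IsTree

theorem treeDist_self (hG : G.IsTree) (w : Sym2 V → ℝ) (a : V) : treeDist G hG w a a = 0 := by
  change ((hG.path a a).edges.map w).sum = 0
  simp [hG.path_self]

theorem treeDist_nonneg (hG : G.IsTree) {w : Sym2 V → ℝ} (hw : ∀ e ∈ G.edgeSet, 0 < w e)
    (a b : V) : 0 ≤ treeDist G hG w a b :=
  List.sum_nonneg fun x hx => by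
    obtain ⟨e, he, rfl⟩ := List.mem_map.1 hx
    exact (hw e ((hG.path a b).edges_subset_edgeSet he)).le

section Components

variable [Fintype V]

theorem mem_compAfterDelete {a z x : V} :
    x ∈ compAfterDelete G a z ↔ (G.deleteEdges {s(a, z)}).Reachable z x := by
  simp [compAfterDelete]

namespace IsTree

theorem mem_compAfterDelete_iff_snd (hG : G.IsTree) {u z y : V} (h : G.Adj u z) :
    y ∈ compAfterDelete G u z ↔ ¬(hG.path u y).Nil ∧ z = (hG.path u y).snd := by
  rw [mem_compAfterDelete, hG.reachable_deleteEdges_iff_not_reachable h,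
    hG.reachable_deleteEdges_iff, not_not, (hG.path_isPath u y).mk_start_mem_edges_iff]

theorem mem_compAfterDelete_iff_snd_ne (hG : G.IsTree) {v u y : V} :
    y ∈ compAfterDelete G v u ↔ (hG.path u y).Nil ∨ (hG.path u y).snd ≠ v := by
  rw [mem_compAfterDelete, Sym2.eq_swap, hG.reachable_deleteEdges_iff,
    (hG.path_isPath u y).mk_start_mem_edges_iff, not_and_or, not_not, eq_comm]

theorem pairwiseDisjoint_compAfterDelete (hG : G.IsTree) (u : V) :
    (G.neighborSet u).PairwiseDisjoint (compAfterDelete G u) := by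
  intro z hz z' hz' hne
  rw [Function.onFun, Finset.disjoint_left]
  intro y hy hy'
  exact hne (((hG.mem_compAfterDelete_iff_snd hz).1 hy).2.trans
    ((hG.mem_compAfterDelete_iff_snd hz').1 hy').2.symm)

variable [DecidableEq V] [DecidableRel G.Adj]

theorem compAfterDelete_eq_insert_biUnion (hG : G.IsTree) (v u : V) :
    compAfterDelete G v u =
      insert u (((G.neighborFinset u).erase v).biUnion (compAfterDelete G u)) := by
  ext y
  rw [hG.mem_compAfterDelete_iff_snd_ne]
  simp only [mem_insert, mem_biUnion, mem_erase, mem_neighborFinset]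
  by_cases hyu : y = u
  · subst hyu
    simp [hG.path_self]
  have hnil : ¬(hG.path u y).Nil := Walk.not_nil_of_ne (Ne.symm hyu)
  simp only [hnil, hyu, false_or]
  constructor
  · intro hv
    exact ⟨_, ⟨hv, Walk.adj_snd hnil⟩,
      (hG.mem_compAfterDelete_iff_snd (Walk.adj_snd hnil)).2 ⟨hnil, rfl⟩⟩
  · rintro ⟨z, ⟨hzv, hz⟩, hy⟩
    rwa [← ((hG.mem_compAfterDelete_iff_snd hz).1 hy).2]

theorem sum_compAfterDelete {M : Type*} [AddCommMonoid M] (hG : G.IsTree) (v u : V)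
    (f : V → M) :
    ∑ y ∈ compAfterDelete G v u, f y =
      f u + ∑ z ∈ (G.neighborFinset u).erase v, ∑ y ∈ compAfterDelete G u z, f y := by
  rw [hG.compAfterDelete_eq_insert_biUnion, sum_insert, sum_biUnion]
  · exact (hG.pairwiseDisjoint_compAfterDelete u).subset
      fun _ hz => (mem_neighborFinset _ _ _).1 (mem_of_mem_erase (mem_coe.1 hz))
  · simp only [mem_biUnion, mem_erase, mem_neighborFinset, not_exists, not_and]
    rintro z ⟨-, hz⟩ hu
    simpa [hG.path_self] using ((hG.mem_compAfterDelete_iff_snd hz).1 hu).1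

end IsTree

end Components

end SimpleGraph

open SimpleGraph

theorem rotate_makes_u_stable_general
    {V : Type*} [Fintype V] [DecidableEq V]
    (G : SimpleGraph V) (hG : G.IsTree)
    (w : Sym2 V → ℝ) (hw : ∀ e ∈ G.edgeSet, 0 < w e)
    (u uf : V)
    (hfar : ∀ z : V, G.Adj u z →
      (∑ y ∈ compAfterDelete G u z, treeDist G hG w u y) /
          ((compAfterDelete G u z).card : ℝ) ≤
        (∑ y ∈ compAfterDelete G u uf, treeDist G hG w u y) /
          ((compAfterDelete G u uf).card : ℝ)) :
    (∑ y ∈ compAfterDelete G uf u, treeDist G hG w u y) /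
        (((compAfterDelete G uf u).card : ℝ) - 1) ≤
      (∑ y ∈ compAfterDelete G u uf, treeDist G hG w u y) /
        ((compAfterDelete G u uf).card : ℝ) := by
  classical
  have hcard : ((compAfterDelete G uf u).card : ℝ) - 1 =
      ∑ z ∈ (G.neighborFinset u).erase uf, ((compAfterDelete G u z).card : ℝ) := by
    have hones := hG.sum_compAfterDelete uf u fun _ => (1 : ℝ)
    simp only [sum_const, nsmul_eq_mul, mul_one] at hones
    linarith
  rw [hG.sum_compAfterDelete uf u, treeDist_self, zero_add, hcard]
  refine sum_div_sum_le_of_forall_div_le ?_ (fun z hz => ?_) fun z hz => hfar z ?_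
  · exact div_nonneg (sum_nonneg fun y _ => treeDist_nonneg hG hw u y) (Nat.cast_nonneg _)
  · exact_mod_cast card_pos.2 ⟨z, mem_compAfterDelete.2 (Reachable.refl z)⟩
  · exact (mem_neighborFinset _ _ _).1 (mem_of_mem_erase hz)

/-- in a finite tree with positive edge weights, if `u^f` is a
furthest neighbor of `u` (the average distance from `u` to the component of
`u^f` obtained by deleting the edge `(u, u^f)` is at least the corresponding
average for every neighbor `w` of `u`), then `u` is IP-stable in the
2-clustering given by the two components of `T` with the edge `(u, u^f)`
removed: the average distance from `u` to the other vertices of its own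
component is at most the average distance from `u` to the vertices of the
component of `u^f`. -/
theorem rotate_makes_u_stable
    {V : Type*} [Fintype V] [DecidableEq V]
    (G : SimpleGraph V) (hG : G.IsTree)
    (w : Sym2 V → ℝ) (hw : ∀ e ∈ G.edgeSet, 0 < w e)
    (u uf : V) (huf : G.Adj u uf)
    (hfar : ∀ z : V, G.Adj u z →
      (∑ y ∈ compAfterDelete G u z, treeDist G hG w u y) /
          ((compAfterDelete G u z).card : ℝ) ≤
        (∑ y ∈ compAfterDelete G u uf, treeDist G hG w u y) /
          ((compAfterDelete G u uf).card : ℝ)) :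
    (∑ y ∈ compAfterDelete G uf u, treeDist G hG w u y) /
        (((compAfterDelete G uf u).card : ℝ) - 1) ≤
      (∑ y ∈ compAfterDelete G u uf, treeDist G hG w u y) /
        ((compAfterDelete G u uf).card : ℝ) :=
  rotate_makes_u_stable_general G hG w hw u uf hfar
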